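/- arXiv:1208.5120 — 2 statements merged into one kernel-verified Lean document; each statement's English description precedes it below -/
import Mathlib

section
/- Let e be a properly infinite projection in an AW*-algebra A. Suppose there is an orthogonal family {e_i}_{i∈I} of projections with Σ e_i = e and e_i ∼ e for all i. Then for every nonempty index set J with |J| ≤ |I| there is an orthogonal family {f_j}_{j∈J} of projections with Σ f_j = e and f_j ∼ e for all j. (That is, the set of cardinalities of index sets of such families is downward-closed.) -/
universe u

section Defs

variable {R : Type u} [Ring R] [StarRing R]

/-- An element is a projection if it is self-adjoint and idempotent. -/
def IsProjection (p : R) : Prop := star p = p ∧ p * p = p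

/-- Order on projections: `e ≤ f` iff `e = ef`. -/
def ProjLE (e f : R) : Prop := e * f = e

/-- Murray–von Neumann equivalence of projections. -/
def ProjEquiv (e f : R) : Prop := ∃ v : R, star v * v = e ∧ v * star v = f

/-- `e ≼ f` : `e` is equivalent to a subprojection of `f`. -/
def ProjSubEquiv (e f : R) : Prop :=
  ∃ e' : R, IsProjection e' ∧ ProjLE e' f ∧ ProjEquiv e e'

/-- `e ≺ f` : `e ≼ f` but `e` is not equivalent to `f` (with the convention `0 ≺ 0`). -/
def ProjLT (e f : R) : Prop :=
  (ProjSubEquiv e f ∧ ¬ ProjEquiv e f) ∨ (e = 0 ∧ f = 0)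

/-- A central projection. -/
def IsCentralProj (z : R) : Prop := IsProjection z ∧ ∀ a : R, z * a = a * z

/-- `c` is the central cover of `e`: the least central projection above `e`. -/
def IsCentralCover (e c : R) : Prop :=
  IsCentralProj c ∧ ProjLE e c ∧
    ∀ z : R, IsCentralProj z → ProjLE e z → ProjLE c z

/-- A projection `e` is finite if `e ∼ f ≤ e` implies `f = e`. -/
def ProjFinite (e : R) : Prop :=
  ∀ f : R, IsProjection f → ProjEquiv e f → ProjLE f e → f = e

/-- A nonzero projection is properly infinite if `ze` is infinite
for every central projection `z` with `ze ≠ 0`. -/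
def ProperlyInfinite (e : R) : Prop :=
  IsProjection e ∧ e ≠ 0 ∧
    ∀ z : R, IsCentralProj z → z * e ≠ 0 → ¬ ProjFinite (z * e)

/-- A pairwise orthogonal family of elements. -/
def PairwiseOrthogonal {ι : Type*} (p : ι → R) : Prop :=
  ∀ i j, i ≠ j → p i * p j = 0

/-- `s` is the supremum of the family `p` in the projection order. For an
orthogonal family, this is the sum `Σ pᵢ`. -/
def IsSupProj {ι : Type*} (p : ι → R) (s : R) : Prop :=
  IsProjection s ∧ (∀ i, ProjLE (p i) s) ∧
    ∀ t : R, IsProjection t → (∀ i, ProjLE (p i) t) → ProjLE s t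

/-- The family `p` belongs to `Γ(e)`: an orthogonal family of projections,
each equivalent to `e`, with sum (supremum) `e`. -/
def InGamma (e : R) {ι : Type u} (p : ι → R) : Prop :=
  (∀ i, IsProjection (p i)) ∧ PairwiseOrthogonal p ∧
    (∀ i, ProjEquiv (p i) e) ∧ IsSupProj p e

open Classical in
/-- The dimension `d(e)` of a properly infinite projection: the least cardinal
strictly greater than the cardinality of the index set of every family in
`Γ(e)`, with the convention `d(0) = 0`. -/
noncomputable def projDim (e : R) : Cardinal.{u} :=
  if e = 0 then 0
  else sSup {c : Cardinal.{u} |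
    ∃ (ι : Type u) (p : ι → R), InGamma e p ∧ c = Order.succ (Cardinal.mk ι)}

/-- A properly infinite projection `e` is equidimensional if `d(ze) = d(e)`
for every central projection `z` with `ze ≠ 0` (equivalently, for every
nonzero central projection `z ≤ c(e)`). -/
def Equidimensional (e : R) : Prop :=
  ProperlyInfinite e ∧
    ∀ z : R, IsCentralProj z → z * e ≠ 0 → projDim (z * e) = projDim e

/-- An abelian projection: the corner `eRe` is commutative. -/
def IsAbelianProj (e : R) : Prop :=
  IsProjection e ∧ ∀ a b : R, (e * a * e) * (e * b * e) = (e * b * e) * (e * a * e)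

/-- `j` is the join `e ∨ f` in the projection lattice. -/
def IsJoinProj (e f j : R) : Prop :=
  IsProjection j ∧ ProjLE e j ∧ ProjLE f j ∧
    ∀ t : R, IsProjection t → ProjLE e t → ProjLE f t → ProjLE j t

end Defs

/-- The AW*-condition: the right annihilator of any subset is generated by a
projection: `{a | ∀ s ∈ S, s a = 0} = pR`. -/
def IsAWStarRing (R : Type*) [Ring R] [StarRing R] : Prop :=
  ∀ S : Set R, ∃ p : R, IsProjection p ∧
    {a : R | ∀ s ∈ S, s * a = 0} = {a : R | ∃ b : R, a = p * b}

/-- A maximal abelian (*-sub)algebra. -/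
def IsMaximalAbelian {A : Type*} [Ring A] [StarRing A] [Algebra ℂ A] [StarModule ℂ A]
    (M : StarSubalgebra ℂ A) : Prop :=
  (∀ x ∈ M, ∀ y ∈ M, x * y = y * x) ∧
    ∀ N : StarSubalgebra ℂ A, (∀ x ∈ N, ∀ y ∈ N, x * y = y * x) → M ≤ N → M = N

/-!
Embed `κ` into `ι` by `f`, pick `k₀ ∈ κ`, keep the projections `p (f k)` for `k ≠ k₀`, and replace
`p₀ = p (f k₀)` by `e - S`, where `S` is the supremum of the others. The new family is orthogonal
with supremum `e`, and `e - S ∼ e` by a Hilbert hotel argument: write `e = w* w`, `p₀ = w w*`;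
since `S ⊥ p₀`, the supremum `G` of the projections `wⁿ S w*ⁿ` splits as `S + w G w*`, and
`u = w G + (e - G)` implements `e ∼ e - G + w G w* = e - S`.
-/

section Projections

variable {R : Type u} [Ring R]

theorem ProjLE.trans {a b c : R} (hab : ProjLE a b) (hbc : ProjLE b c) : ProjLE a c := by
  unfold ProjLE at *
  rw [← hab, mul_assoc, hbc]

variable [StarRing R]

theorem ProjEquiv.symm {a b : R} (h : ProjEquiv a b) : ProjEquiv b a := by
  obtain ⟨v, hv, hv'⟩ := h
  exact ⟨star v, by rwa [star_star], by rwa [star_star]⟩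

theorem ProjLE.mul_left_eq {a b : R} (ha : star a = a) (hb : star b = b) (hab : ProjLE a b) :
    b * a = a := by
  simpa only [star_mul, ha, hb] using congrArg star hab

theorem mul_eq_zero_swap_of_selfAdjoint {a b : R} (ha : star a = a) (hb : star b = b)
    (hab : a * b = 0) : b * a = 0 := by
  simpa only [star_mul, ha, hb, star_zero] using congrArg star hab

theorem IsProjection.sub {e f : R} (he : IsProjection e) (hf : IsProjection f)
    (hfe : ProjLE f e) : IsProjection (e - f) := by
  have hef : e * f = f := hfe.mul_left_eq hf.1 he.1
  refine ⟨by rw [star_sub, he.1, hf.1], ?_⟩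
  rw [sub_mul, mul_sub, mul_sub, he.2, hfe, hef, hf.2]
  abel

theorem IsProjection.one_sub {e : R} (he : IsProjection e) : IsProjection (1 - e) :=
  IsProjection.sub ⟨star_one R, mul_one 1⟩ he (mul_one e)

theorem IsProjection.conj {g w : R} (hg : IsProjection g) (hgw : ProjLE g (star w * w)) :
    IsProjection (w * g * star w) := by
  refine ⟨by rw [star_mul, star_mul, star_star, hg.1, mul_assoc], ?_⟩
  calc w * g * star w * (w * g * star w) = w * ((g * (star w * w)) * g) * star w := by
        noncomm_ring
    _ = w * g * star w := by rw [hgw, hg.2]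

theorem projLE_conj {g w : R} (hgw : ProjLE g (star w * w)) :
    ProjLE (w * g * star w) (w * star w) := by
  calc w * g * star w * (w * star w) = w * (g * (star w * w)) * star w := by noncomm_ring
    _ = w * g * star w := by rw [hgw]

end Projections

section AnnihilatorSup

variable {R : Type u} [Ring R] [StarRing R] {ι : Type*}

/-- `G` is the supremum of `x` in the strong sense provided by the AW*-axiom: the right
annihilator of the family is `(1 - G) R`. -/
structure IsAnnihilatorSup (x : ι → R) (G : R) : Prop where
  isProjection : IsProjection G
  le : ∀ i, ProjLE (x i) G
  mul_eq_zero_of_forall : ∀ a, (∀ i, x i * a = 0) → G * a = 0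

theorem IsAWStarRing.exists_isAnnihilatorSup (hAW : IsAWStarRing R) (x : ι → R) :
    ∃ G, IsAnnihilatorSup x G := by
  obtain ⟨g, hg, hann⟩ := hAW (Set.range x)
  have mem_iff (a : R) : (∀ i, x i * a = 0) ↔ ∃ b, a = g * b := by
    simpa using Set.ext_iff.mp hann a
  have hxg : ∀ i, x i * g = 0 := (mem_iff g).mpr ⟨g, hg.2.symm⟩
  refine ⟨1 - g, hg.one_sub, fun i => ?_, fun a ha => ?_⟩
  · show x i * (1 - g) = x i
    rw [mul_sub, mul_one, hxg, sub_zero]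
  · obtain ⟨b, rfl⟩ := (mem_iff a).mp ha
    rw [← mul_assoc, sub_mul, one_mul, hg.2, sub_self, zero_mul]

namespace IsAnnihilatorSup

variable {x : ι → R} {G : R}

theorem projLE_of_forall (hG : IsAnnihilatorSup x G) {t : R} (ht : ∀ i, ProjLE (x i) t) :
    ProjLE G t := by
  have h : G * (1 - t) = 0 :=
    hG.mul_eq_zero_of_forall _ fun i => by rw [mul_sub, mul_one, ht i, sub_self]
  rwa [mul_sub, mul_one, sub_eq_zero, eq_comm] at h

theorem unique (hG : IsAnnihilatorSup x G) {G' : R} (hG' : IsAnnihilatorSup x G') : G = G' := by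
  have h₁ : G * G' = G := hG.projLE_of_forall hG'.le
  have h₂ : G * G' = G' :=
    (hG'.projLE_of_forall hG.le).mul_left_eq hG'.isProjection.1 hG.isProjection.1
  rw [← h₁, h₂]

theorem conj (hG : IsAnnihilatorSup x G) {w e : R} (hw : star w * w = e)
    (hx : ∀ i, IsProjection (x i)) (hxe : ∀ i, ProjLE (x i) e) :
    IsAnnihilatorSup (fun i => w * x i * star w) (w * G * star w) := by
  subst hw
  have hGe : ProjLE G (star w * w) := hG.projLE_of_forall hxe
  refine ⟨hG.isProjection.conj hGe, fun i => ?_, fun a ha => ?_⟩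
  · calc w * x i * star w * (w * G * star w) = w * ((x i * (star w * w)) * G) * star w := by
          noncomm_ring
      _ = w * x i * star w := by rw [hxe i, hG.le i]
  · have hxa : ∀ i, x i * (star w * a) = 0 := fun i => by
      calc x i * (star w * a) = star w * w * x i * (star w * a) := by
            rw [(hxe i).mul_left_eq (hx i).1 (by rw [star_mul, star_star])]
        _ = star w * (w * x i * star w * a) := by noncomm_ring
        _ = 0 := by rw [ha i, mul_zero]
    show w * G * star w * a = 0
    rw [mul_assoc, mul_assoc, hG.mul_eq_zero_of_forall _ hxa, mul_zero]

theorem eq_add_of_succ {g : ℕ → R} (hg : ∀ n, IsProjection (g n))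
    (horth : ∀ n, g 0 * g (n + 1) = 0) (hG : IsAnnihilatorSup g G) {G₁ : R}
    (hG₁ : IsAnnihilatorSup (fun n => g (n + 1)) G₁) : G = g 0 + G₁ := by
  have hG₁g : G₁ * g 0 = 0 :=
    hG₁.mul_eq_zero_of_forall _ fun n =>
      mul_eq_zero_swap_of_selfAdjoint (hg 0).1 (hg _).1 (horth n)
  have hgG₁ : g 0 * G₁ = 0 :=
    mul_eq_zero_swap_of_selfAdjoint hG₁.isProjection.1 (hg 0).1 hG₁g
  have hGle : ProjLE G (g 0 + G₁) := hG.projLE_of_forall fun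
    | 0 => by show g 0 * (g 0 + G₁) = g 0; rw [mul_add, (hg 0).2, hgG₁, add_zero]
    | n + 1 => by
      show g (n + 1) * (g 0 + G₁) = g (n + 1)
      rw [mul_add, mul_eq_zero_swap_of_selfAdjoint (hg 0).1 (hg _).1 (horth n), hG₁.le n,
        zero_add]
  have hG₁G : ProjLE G₁ G := hG₁.projLE_of_forall fun n => hG.le (n + 1)
  calc G = g 0 * G + G₁ * G := by
        rw [← add_mul, hGle.mul_left_eq hG.isProjection.1
          (by rw [star_add, (hg 0).1, hG₁.isProjection.1])]
    _ = g 0 + G₁ := by rw [hG.le 0, hG₁G]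

end IsAnnihilatorSup

section HilbertHotel

variable {R : Type u} [Ring R] [StarRing R]

theorem projEquiv_sub_add_conj {e w G : R} (he : IsProjection e) (hw : star w * w = e)
    (hG : IsProjection G) (hGe : ProjLE G e) (hG₁G : ProjLE (w * G * star w) G) :
    ProjEquiv (e - G + w * G * star w) e := by
  set G₁ := w * G * star w
  have hG₁sa : star G₁ = G₁ := by rw [star_mul, star_mul, star_star, hG.1, ← mul_assoc]
  have hvv : star (w * G) * (w * G) = G := by
    rw [star_mul, hG.1, ← mul_assoc, mul_assoc G, hw, hGe, hG.2]
  have hvv' : w * G * star (w * G) = G₁ := by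
    rw [star_mul, hG.1, ← mul_assoc, mul_assoc w, hG.2]
  have hG₁v : G₁ * (w * G) = w * G := by
    rw [← hvv', mul_assoc, hvv, mul_assoc, hG.2]
  have hcv : (e - G) * (w * G) = 0 := by
    have hcG₁ : (e - G) * G₁ = 0 := by
      rw [sub_mul, (hG₁G.trans hGe).mul_left_eq hG₁sa he.1, hG₁G.mul_left_eq hG₁sa hG.1,
        sub_self]
    rw [← hG₁v, ← mul_assoc, hcG₁, zero_mul]
  have hvc : w * G * (e - G) = 0 := by rw [mul_assoc, mul_sub, hGe, hG.2, sub_self, mul_zero]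
  have hc : IsProjection (e - G) := he.sub hG hGe
  have hcv' : star (w * G) * (e - G) = 0 := by
    simpa only [star_mul, star_zero, hc.1] using congrArg star hcv
  have hvc' : (e - G) * star (w * G) = 0 := by
    simpa only [star_mul, star_zero, hc.1] using congrArg star hvc
  refine ⟨star (w * G + (e - G)), ?_, ?_⟩
  · rw [star_star, star_add, hc.1, add_mul, mul_add, mul_add, hvv', hvc, hvc', hc.2]
    abel
  · rw [star_star, star_add, hc.1, add_mul, mul_add, mul_add, hvv, hcv', hcv, hc.2]
    abel

theorem projEquiv_sub_of_orthogonal (hAW : IsAWStarRing R) {e p₀ g : R} (he : IsProjection e)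
    (hp₀ : ProjEquiv e p₀) (hp₀e : ProjLE p₀ e) (hg : IsProjection g) (hge : ProjLE g e)
    (hgp₀ : g * p₀ = 0) : ProjEquiv (e - g) e := by
  obtain ⟨w, hw, rfl⟩ := hp₀
  set gs : ℕ → R := fun n => (fun x => w * x * star w)^[n] g
  have gs_succ (n : ℕ) : gs (n + 1) = w * gs n * star w := Function.iterate_succ_apply' _ _ _
  have hgs (n : ℕ) : IsProjection (gs n) ∧ ProjLE (gs n) e := by
    induction n with
    | zero => exact ⟨hg, hge⟩
    | succ n ih =>
      have hle : ProjLE (gs n) (star w * w) := hw ▸ ih.2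
      rw [gs_succ]
      exact ⟨ih.1.conj hle, (projLE_conj hle).trans hp₀e⟩
  have horth (n : ℕ) : gs 0 * gs (n + 1) = 0 := by
    have hle : ProjLE (gs (n + 1)) (w * star w) := by
      rw [gs_succ]; exact projLE_conj (hw ▸ (hgs n).2)
    show g * gs (n + 1) = 0
    rw [← hle.mul_left_eq (hgs _).1.1 (by rw [star_mul, star_star]), ← mul_assoc, hgp₀, zero_mul]
  obtain ⟨G, hG⟩ := hAW.exists_isAnnihilatorSup gs
  obtain ⟨G₁, hG₁⟩ := hAW.exists_isAnnihilatorSup fun n => gs (n + 1)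
  have hsplit : G = g + G₁ := hG.eq_add_of_succ (fun n => (hgs n).1) horth hG₁
  have hconj : w * G * star w = G₁ := by
    refine (hG.conj hw (fun n => (hgs n).1) (fun n => (hgs n).2)).unique ?_
    simpa only [gs_succ] using hG₁
  have hG₁G : ProjLE G₁ G := hG₁.projLE_of_forall fun n => hG.le (n + 1)
  have hequiv := projEquiv_sub_add_conj he hw hG.isProjection
    (hG.projLE_of_forall fun n => (hgs n).2) (hconj ▸ hG₁G)
  rwa [hconj, hsplit, sub_add_eq_sub_sub, sub_add_cancel] at hequiv

end HilbertHotel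

section Gamma

variable {R : Type u} [Ring R] [StarRing R]

open Function in
theorem inGamma_update_sub {κ : Type u} [DecidableEq κ] {e S : R} {y : κ → R} {k₀ : κ}
    (he : IsProjection e) (hy : ∀ k, IsProjection (y k)) (hyo : PairwiseOrthogonal y)
    (hye : ∀ k, ProjEquiv (y k) e) (hyle : ∀ k, ProjLE (y k) e)
    (hS : IsAnnihilatorSup (fun k : {k // k ≠ k₀} => y k) S) (hSe : ProjEquiv (e - S) e) :
    InGamma e (update y k₀ (e - S)) := by
  have hSle : ProjLE S e := hS.projLE_of_forall fun k => hyle k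
  have hc : IsProjection (e - S) := he.sub hS.isProjection hSle
  have hyc (k : κ) (hk : k ≠ k₀) : y k * (e - S) = 0 := by
    rw [mul_sub, hyle k, hS.le ⟨k, hk⟩, sub_self]
  refine ⟨(forall_update_iff y fun _ q => IsProjection q).mpr ⟨hc, fun k _ => hy k⟩,
    fun k k' hkk' => ?_,
    (forall_update_iff y fun _ q => ProjEquiv q e).mpr ⟨hSe, fun k _ => hye k⟩, he,
    (forall_update_iff y fun _ q => ProjLE q e).mpr
      ⟨by rw [ProjLE, sub_mul, he.2, hSle], fun k _ => hyle k⟩,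
    fun t _ ht => ?_⟩
  · rcases eq_or_ne k k₀ with hk | hk <;> rcases eq_or_ne k' k₀ with hk' | hk'
    · exact absurd (hk.trans hk'.symm) hkk'
    · rw [hk, update_self, update_of_ne hk']
      exact mul_eq_zero_swap_of_selfAdjoint (hy k').1 hc.1 (hyc k' hk')
    · rw [hk', update_of_ne hk, update_self]; exact hyc k hk
    · rw [update_of_ne hk, update_of_ne hk']; exact hyo k k' hkk'
  · have hSt : ProjLE S t := hS.projLE_of_forall fun k => by simpa [update_of_ne k.2] using ht k
    have hct : ProjLE (e - S) t := by simpa using ht k₀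
    calc e * t = (e - S) * t + S * t := by rw [← add_mul, sub_add_cancel]
      _ = e := by rw [hct, hSt, sub_add_cancel]

end Gamma

theorem gamma_downward_closed_general {A : Type u} [NormedRing A] [StarRing A]
    (hAW : IsAWStarRing A) (e : A)
    (ι : Type u) (p : ι → A) (hp : InGamma e p)
    (κ : Type u) (hκ : Nonempty κ) (hle : Cardinal.mk κ ≤ Cardinal.mk ι) :
    ∃ q : κ → A, InGamma e q := by
  classical
  obtain ⟨k₀⟩ := hκ
  obtain ⟨f⟩ := (Cardinal.le_def κ ι).mp hle
  obtain ⟨hpP, hpO, hpE, he, hpe, -⟩ := hp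
  obtain ⟨S, hS⟩ := hAW.exists_isAnnihilatorSup fun k : {k // k ≠ k₀} => p (f k)
  have hSp : S * p (f k₀) = 0 := hS.mul_eq_zero_of_forall _ fun k => hpO _ _ (f.injective.ne k.2)
  have hSe : ProjEquiv (e - S) e := projEquiv_sub_of_orthogonal hAW he (hpE (f k₀)).symm
    (hpe _) hS.isProjection (hS.projLE_of_forall fun k => hpe _) hSp
  exact ⟨_, inGamma_update_sub he (fun k => hpP (f k)) (fun k k' h => hpO _ _ (f.injective.ne h))
    (fun k => hpE (f k)) (fun k => hpe (f k)) hS hSe⟩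

/-- The set of cardinalities of index sets of families in `Γ(e)` is
downward-closed. -/
theorem gamma_downward_closed {A : Type u} [NormedRing A] [StarRing A] [CStarRing A]
    [NormedAlgebra ℂ A] [StarModule ℂ A] [CompleteSpace A]
    (hAW : IsAWStarRing A) (e : A) (he : ProperlyInfinite e)
    (ι : Type u) (p : ι → A) (hp : InGamma e p)
    (κ : Type u) (hκ : Nonempty κ) (hle : Cardinal.mk κ ≤ Cardinal.mk ι) :
    ∃ q : κ → A, InGamma e q :=
  gamma_downward_closed_general hAW e ι p hp κ hκ hle
end AnnihilatorSup
end

section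
/- Let m and n be positive integers and let A be a nonzero AW*-algebra of type I_m. If 1 = e₁ + ⋯ + e_n for pairwise orthogonal, pairwise equivalent projections e₁, …, e_n in A, then n divides m. -/
universe u

/-!
Write `1 = ∑ᵢ pᵢ` with abelian `pᵢ ∼ p₀` and pick partial isometries `vᵢ` with `vᵢ⋆ vᵢ = p₀`,
`vᵢ vᵢ⋆ = pᵢ`. Then `a ↦ (vᵢ⋆ a vⱼ)ᵢⱼ` is a unital ring homomorphism `A → Mₘ(p₀ A p₀)` into
matrices over a commutative ring, and reducing modulo a maximal ideal gives `Φ : A → Mₘ(K)` with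
`K` a field of characteristic zero (it receives `ℂ`). The traces of the idempotent matrices
`Φ eⱼ` are ranks, all equal to some `r` because the `eⱼ` are pairwise equivalent, and they add up
to `tr 1 = m`; hence `n * r = m`.
-/

theorem mul_star_mul_self_of_isIdempotentElem {A : Type*} [NonUnitalNormedRing A] [StarRing A]
    [CStarRing A] {v : A} (h : IsIdempotentElem (star v * v)) : v * (star v * v) = v := by
  set f := star v * v with hf
  have hsf : star f = f := by rw [hf, star_mul, star_star]
  have hzero : star (v * f - v) * (v * f - v) = f * f * f - f * f - f * f + f := by
    rw [star_sub, star_mul, hsf, hf]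
    noncomm_ring
  rwa [h.eq, h.eq, sub_self, zero_sub, neg_add_cancel, CStarRing.star_mul_self_eq_zero_iff,
    sub_eq_zero] at hzero

theorem Matrix.trace_eq_finrank_range_of_isIdempotentElem {K ι : Type*} [Field K] [Fintype ι]
    [DecidableEq ι] {P : Matrix ι ι K} (hP : IsIdempotentElem P) :
    P.trace = Module.finrank K (LinearMap.range P.toLin') := by
  have hlin : IsIdempotentElem P.toLin' := hP.map Matrix.toLinAlgEquiv'
  rw [← Matrix.trace_toLin'_eq, (LinearMap.IsIdempotentElem.isProj_range _ hlin).trace]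

section Corner

variable {R : Type*} [Ring R] {f : R} (hf : IsIdempotentElem f)

theorem IsIdempotentElem.Corner.ext {a b : hf.Corner} (hab : a.1 = b.1) : a = b := Subtype.ext hab

theorem IsIdempotentElem.Corner.val_sum {ι : Type*} (s : Finset ι) (g : ι → hf.Corner) :
    (∑ i ∈ s, g i).1 = ∑ i ∈ s, (g i).1 :=
  map_sum (NonUnitalRing.corner f).subtype g s

abbrev IsIdempotentElem.cornerCommRing
    (hcomm : ∀ a b : R, f * a * f * (f * b * f) = f * b * f * (f * a * f)) :
    CommRing hf.Corner where
  __ : Ring hf.Corner := inferInstance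
  mul_comm a b := by
    obtain ⟨r, hr⟩ := a.2
    obtain ⟨s, hs⟩ := b.2
    refine IsIdempotentElem.Corner.ext hf ?_
    change a.1 * b.1 = b.1 * a.1
    rw [← hr, ← hs]
    exact hcomm r s

def IsIdempotentElem.cornerAlgebraMap (𝕜 : Type*) [CommSemiring 𝕜] [Algebra 𝕜 R] :
    𝕜 →+* hf.Corner where
  toFun c := ⟨algebraMap 𝕜 R c * f, (Subsemigroup.mem_corner_iff hf).mpr
    ⟨by rw [← mul_assoc, ← Algebra.commutes, mul_assoc, hf.eq], by rw [mul_assoc, hf.eq]⟩⟩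
  map_one' := IsIdempotentElem.Corner.ext hf <| by
    change algebraMap 𝕜 R 1 * f = f
    rw [map_one, one_mul]
  map_mul' c d := IsIdempotentElem.Corner.ext hf <| by
    change algebraMap 𝕜 R (c * d) * f = algebraMap 𝕜 R c * f * (algebraMap 𝕜 R d * f)
    simp only [map_mul, mul_assoc]
    rw [← mul_assoc f, ← Algebra.commutes, mul_assoc, hf.eq]
  map_zero' := IsIdempotentElem.Corner.ext hf <| by
    change algebraMap 𝕜 R 0 * f = 0
    rw [map_zero, zero_mul]
  map_add' c d := IsIdempotentElem.Corner.ext hf <| by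
    change algebraMap 𝕜 R (c + d) * f = algebraMap 𝕜 R c * f + algebraMap 𝕜 R d * f
    rw [map_add, add_mul]

end Corner

/-- The products `x i * y j` form a system of matrix units, with `x i * y i ∼ f` for every `i`. -/
structure IsMatrixUnitSystem {R : Type*} [Ring R] {ι : Type*} [Fintype ι] [DecidableEq ι]
    (f : R) (x y : ι → R) : Prop where
  mul_eq_ite : ∀ i j, y i * x j = if i = j then f else 0
  sum_mul_eq_one : ∑ i, x i * y i = 1

namespace IsMatrixUnitSystem

variable {R : Type*} [Ring R] {ι : Type*} [Fintype ι] [DecidableEq ι] {f : R} {x y : ι → R}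

theorem mul_right_eq_self (h : IsMatrixUnitSystem f x y) (i : ι) : x i * f = x i :=
  calc x i * f = ∑ k, x k * (y k * x i) := by simp [h.mul_eq_ite]
    _ = (∑ k, x k * y k) * x i := by rw [Finset.sum_mul]; simp only [mul_assoc]
    _ = x i := by rw [h.sum_mul_eq_one, one_mul]

theorem mul_left_eq_self (h : IsMatrixUnitSystem f x y) (i : ι) : f * y i = y i :=
  calc f * y i = ∑ k, (y i * x k) * y k := by simp [h.mul_eq_ite]
    _ = y i * ∑ k, x k * y k := by rw [Finset.mul_sum]; simp only [mul_assoc]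
    _ = y i := by rw [h.sum_mul_eq_one, mul_one]

theorem ne_zero [Nontrivial R] (h : IsMatrixUnitSystem f x y) : f ≠ 0 := by
  intro hf0
  refine one_ne_zero (α := R) ?_
  rw [← h.sum_mul_eq_one]
  exact Finset.sum_eq_zero fun i _ => by rw [← h.mul_right_eq_self, hf0, mul_zero, zero_mul]

variable (h : IsMatrixUnitSystem f x y) (hf : IsIdempotentElem f)

def coeff (a : R) (i j : ι) : hf.Corner :=
  ⟨y i * a * x j, (Subsemigroup.mem_corner_iff hf).mpr
    ⟨by rw [← mul_assoc, ← mul_assoc, h.mul_left_eq_self], by rw [mul_assoc, h.mul_right_eq_self]⟩⟩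

theorem coeff_mul (a b : R) (i j : ι) :
    h.coeff hf (a * b) i j = ∑ k, h.coeff hf a i k * h.coeff hf b k j := by
  refine IsIdempotentElem.Corner.ext hf ?_
  rw [IsIdempotentElem.Corner.val_sum]
  calc y i * (a * b) * x j = y i * a * (∑ k, x k * y k) * b * x j := by
        simp only [h.sum_mul_eq_one, mul_one, mul_assoc]
    _ = ∑ k, y i * a * x k * (y k * b * x j) := by
        simp only [Finset.mul_sum, Finset.sum_mul, mul_assoc]

def toMatrix : R →+* Matrix ι ι hf.Corner where
  toFun a := Matrix.of (h.coeff hf a)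
  map_one' := by
    ext i j
    refine IsIdempotentElem.Corner.ext hf ?_
    change y i * 1 * x j = ((1 : Matrix ι ι hf.Corner) i j).1
    rw [mul_one, h.mul_eq_ite, Matrix.one_apply]
    split_ifs <;> rfl
  map_mul' a b := by
    ext i j
    exact h.coeff_mul hf a b i j
  map_zero' := by
    ext i j
    exact IsIdempotentElem.Corner.ext hf (by change y i * 0 * x j = 0; simp)
  map_add' a b := by
    ext i j
    exact IsIdempotentElem.Corner.ext hf
      (by change y i * (a + b) * x j = y i * a * x j + y i * b * x j; rw [mul_add, add_mul])

end IsMatrixUnitSystem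

theorem exists_isMatrixUnitSystem_of_projEquiv {A : Type*} [NormedRing A] [StarRing A]
    [CStarRing A] {ι : Type*} [Fintype ι] [DecidableEq ι] {f : A} {p : ι → A}
    (hf : IsIdempotentElem f) (horth : PairwiseOrthogonal p) (hsum : ∑ i, p i = 1)
    (hequiv : ∀ i, ProjEquiv f (p i)) :
    ∃ v : ι → A, IsMatrixUnitSystem f v (fun i => star (v i)) := by
  choose v hvf hvp using hequiv
  have hv : ∀ i, v i * (star (v i) * v i) = v i := fun i =>
    mul_star_mul_self_of_isIdempotentElem (by rw [hvf i]; exact hf)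
  have hv' : ∀ i, star (v i) * v i * star (v i) = star (v i) := fun i => by
    simpa [mul_assoc] using congrArg star (hv i)
  refine ⟨v, fun i j => ?_, by simpa only [hvp] using hsum⟩
  split_ifs with hij
  · exact hij ▸ hvf i
  · calc star (v i) * v j = star (v i) * v i * star (v i) * (v j * (star (v j) * v j)) := by
          rw [hv, hv']
      _ = star (v i) * (p i * p j) * v j := by simp only [← hvp, mul_assoc]
      _ = 0 := by rw [horth i j hij, mul_zero, zero_mul]

theorem IsMatrixUnitSystem.exists_ringHom_matrix_field {𝕜 : Type*} [Field 𝕜] [CharZero 𝕜]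
    {R : Type u} [Ring R] [Algebra 𝕜 R] [Nontrivial R] {ι : Type*} [Fintype ι] [DecidableEq ι]
    {f : R} {x y : ι → R} (h : IsMatrixUnitSystem f x y) (hf : IsIdempotentElem f)
    (hcomm : ∀ a b : R, f * a * f * (f * b * f) = f * b * f * (f * a * f)) :
    ∃ (K : Type u) (_ : Field K), CharZero K ∧ Nonempty (R →+* Matrix ι ι K) := by
  let := hf.cornerCommRing hcomm
  have : Nontrivial hf.Corner := ⟨⟨1, 0, fun h10 => h.ne_zero (congrArg Subtype.val h10)⟩⟩
  obtain ⟨I, hI⟩ := Ideal.exists_maximal hf.Corner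
  let := Ideal.Quotient.field I
  exact ⟨hf.Corner ⧸ I, inferInstance,
    charZero_of_injective_ringHom ((Ideal.Quotient.mk I).comp (hf.cornerAlgebraMap 𝕜)).injective,
    ⟨(Ideal.Quotient.mk I).mapMatrix.comp (h.toMatrix hf)⟩⟩

theorem card_dvd_card_of_ringHom_matrix {R K ι κ : Type*} [Ring R] [Field K] [CharZero K]
    [Fintype ι] [Nonempty ι] [Fintype κ] [DecidableEq κ] (Φ : R →+* Matrix κ κ K) {e : ι → R}
    (he : ∀ i, IsIdempotentElem (e i)) (hequiv : ∀ i j, ∃ a b, a * b = e i ∧ b * a = e j)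
    (hsum : ∑ i, e i = 1) : Fintype.card ι ∣ Fintype.card κ := by
  obtain ⟨i₀⟩ := ‹Nonempty ι›
  have htrace : ∀ i, (Φ (e i)).trace = (Φ (e i₀)).trace := fun i => by
    obtain ⟨a, b, hab, hba⟩ := hequiv i i₀
    rw [← hab, ← hba, map_mul, map_mul, Matrix.trace_mul_comm]
  set r := Module.finrank K (LinearMap.range (Φ (e i₀)).toLin')
  have hr : (Φ (e i₀)).trace = r :=
    Matrix.trace_eq_finrank_range_of_isIdempotentElem ((he i₀).map Φ)
  have hcast : ((Fintype.card ι * r : ℕ) : K) = Fintype.card κ :=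
    calc ((Fintype.card ι * r : ℕ) : K) = ∑ i, (Φ (e i)).trace := by simp [htrace, hr]
      _ = (Φ 1).trace := by rw [← hsum, map_sum, Matrix.trace_sum]
      _ = Fintype.card κ := by rw [map_one, Matrix.trace_one]
  exact ⟨r, (Nat.cast_injective hcast).symm⟩

theorem typeIm_divisibility_general {A : Type u} [NormedRing A] [StarRing A] [CStarRing A]
    [NormedAlgebra ℂ A] (hA : (1 : A) ≠ 0)
    (m n : ℕ) (hm : 0 < m) (hn : 0 < n)
    (hIm : ∃ f : Fin m → A, (∀ i, IsAbelianProj (f i)) ∧ PairwiseOrthogonal f ∧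
      (∀ i j, ProjEquiv (f i) (f j)) ∧ ∑ i, f i = 1)
    (e : Fin n → A) (hproj : ∀ i, IsProjection (e i))
    (hequiv : ∀ i j, ProjEquiv (e i) (e j)) (hsum : ∑ i, e i = 1) :
    n ∣ m := by
  obtain ⟨p, hpab, hporth, hpequiv, hpsum⟩ := hIm
  have : Nontrivial A := nontrivial_of_ne 1 0 hA
  have : Nonempty (Fin n) := ⟨⟨0, hn⟩⟩
  let i₀ : Fin m := ⟨0, hm⟩
  have hf : IsIdempotentElem (p i₀) := (hpab i₀).1.2
  obtain ⟨v, hv⟩ := exists_isMatrixUnitSystem_of_projEquiv hf hporth hpsum (hpequiv i₀)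
  obtain ⟨K, _, _, ⟨Φ⟩⟩ := hv.exists_ringHom_matrix_field (𝕜 := ℂ) hf (hpab i₀).2
  have hsim : ∀ i j, ∃ a b, a * b = e i ∧ b * a = e j := fun i j =>
    let ⟨w, hw, hw'⟩ := hequiv i j
    ⟨star w, w, hw, hw'⟩
  simpa using card_dvd_card_of_ringHom_matrix Φ (fun i => (hproj i).2) hsim hsum

/-- In a nonzero AW*-algebra of type I_m, if `1` is a sum of `n` pairwise
orthogonal, pairwise equivalent projections, then `n` divides `m`. -/
theorem typeIm_divisibility {A : Type u} [NormedRing A] [StarRing A] [CStarRing A]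
    [NormedAlgebra ℂ A] [StarModule ℂ A] [CompleteSpace A]
    (hAW : IsAWStarRing A) (hA : (1 : A) ≠ 0)
    (m n : ℕ) (hm : 0 < m) (hn : 0 < n)
    (hIm : ∃ f : Fin m → A, (∀ i, IsAbelianProj (f i)) ∧ PairwiseOrthogonal f ∧
      (∀ i j, ProjEquiv (f i) (f j)) ∧ ∑ i, f i = 1)
    (e : Fin n → A) (hproj : ∀ i, IsProjection (e i)) (horth : PairwiseOrthogonal e)
    (hequiv : ∀ i j, ProjEquiv (e i) (e j)) (hsum : ∑ i, e i = 1) :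
    n ∣ m :=
  typeIm_divisibility_general hA m n hm hn hIm e hproj hequiv hsum
end
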